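/- If x ∈ Ext(B_J) and n₁ < n₂ are consecutive elements of supp(x), then x(n₁)x(n₂) < 0. -/

import Mathlib

open Filter Topology Classical

noncomputable section

/-- Admissible finite families of pairwise disjoint, increasingly ordered intervals
`[f i .1, f i .2]` of `ℕ`. -/
def Admissible (n : ℕ) (f : Fin n → ℕ × ℕ) : Prop :=
  (∀ i, (f i).1 ≤ (f i).2) ∧ ∀ i j : Fin n, i < j → (f i).2 < (f j).1

/-- The set of estimates appearing in the definition of the James norm. -/
def estimates (x : ℕ → ℝ) : Set ℝ :=
  {r | ∃ n, ∃ f : Fin n → ℕ × ℕ, Admissible n f ∧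
    r = Real.sqrt (∑ i, (∑ k ∈ Finset.Icc (f i).1 (f i).2, x k) ^ 2)}

/-- `x` belongs to the James space `J`. -/
def MemJ (x : ℕ → ℝ) : Prop := BddAbove (estimates x)

/-- The James norm. -/
def jamesNorm (x : ℕ → ℝ) : ℝ := sSup (estimates x)

/-- The ℓ² norm. -/
def l2Norm (x : ℕ → ℝ) : ℝ := Real.sqrt (∑' k, (x k) ^ 2)

/-- The closed unit ball of the James space. -/
def ballJ : Set (ℕ → ℝ) := {x | MemJ x ∧ jamesNorm x ≤ 1}

/-- The support of a sequence. -/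
def supp (x : ℕ → ℝ) : Set ℕ := {n | x n ≠ 0}

/-- The (possibly infinite) sum of `x` over a subset `I` of `ℕ`,
as the limit of the partial sums. -/
def setSum (x : ℕ → ℝ) (I : Set ℕ) : ℝ :=
  limUnder atTop (fun N => ∑ k ∈ Finset.range N, if k ∈ I then x k else 0)

/-- An `x`-norming family: a (finite or infinite) family of pairwise disjoint
nonempty intervals of `ℕ`, indexed by an initial segment `F` of `ℕ`, ordered
increasingly, whose interval sums exist and realize the James norm of `x`. -/
structure NormingFamily (x : ℕ → ℝ) where
  F : Set ℕ
  F_nonempty : F.Nonempty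
  initial : ∀ ⦃m n : ℕ⦄, m ≤ n → n ∈ F → m ∈ F
  I : ℕ → Set ℕ
  I_nonempty : ∀ i ∈ F, (I i).Nonempty
  I_interval : ∀ i ∈ F, (I i).OrdConnected
  ordered : ∀ i ∈ F, ∀ j ∈ F, i < j → ∀ a ∈ I i, ∀ b ∈ I j, a < b
  sums_exist : ∀ i ∈ F, ∃ l : ℝ,
    Tendsto (fun N => ∑ k ∈ Finset.range N, if k ∈ I i then x k else 0) atTop (𝓝 l)
  norming : ∑' i : F, (setSum x (I i)) ^ 2 = (jamesNorm x) ^ 2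

/-- An `x`-norming partition: an `x`-norming family whose intervals cover the
support of `x`, every interval has its minimum in the support, every non-final
interval has its maximum in the support, and the final interval does not extend
beyond the supremum of the support. -/
structure NormingPartition (x : ℕ → ℝ) extends NormingFamily x where
  covers : supp x ⊆ ⋃ i ∈ F, I i
  min_in_supp : ∀ i ∈ F, ∃ m ∈ I i ∩ supp x, ∀ k ∈ I i, m ≤ k
  max_in_supp : ∀ i ∈ F, (∃ j ∈ F, i < j) → ∃ m ∈ I i ∩ supp x, ∀ k ∈ I i, k ≤ m
  bounded_by_supp : ∀ i ∈ F, ∀ k ∈ I i, ∃ m ∈ supp x, k ≤ m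

/-- `n₁ < n₂` are consecutive elements of the support of `x`. -/
def Consecutive (x : ℕ → ℝ) (n₁ n₂ : ℕ) : Prop :=
  n₁ ∈ supp x ∧ n₂ ∈ supp x ∧ n₁ < n₂ ∧ ∀ k, n₁ < k → k < n₂ → x k = 0

end

/-!
If `a = x n₁` and `b = x n₂` had the same sign, `x` would be the proper convex combination
`(a • y₁ + b • y₂) / (a + b)` of `y₁ = x + b eₙ₁ - b eₙ₂` and `y₂ = x + a eₙ₂ - a eₙ₁`, each of
which merges the two masses into one site. Moving a mass across a gap of zeros does not increase
the James norm: encode a family of intervals as the fibres of a monotone `β : ℕ → ℕ`; collapsing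
the gap onto its target end is a monotone `g`, and the blocks of `β ∘ g` carry the same sums for
`x` as the blocks of `β` carry for the merged vector. So `y₁, y₂ ∈ B_J`, against extremality.
-/

open Finset

noncomputable def blockSum (x : ℕ → ℝ) (N : ℕ) (β : ℕ → ℕ) (j : ℕ) : ℝ :=
  ∑ k ∈ (range N).filter (fun k => β k = j), x k

/- For monotone `β`, the fibres of `β` cut `range N` into consecutive intervals, and
`blockVal x N β` is the square of the corresponding James estimate. -/
noncomputable def blockVal (x : ℕ → ℝ) (N : ℕ) (β : ℕ → ℕ) : ℝ :=
  ∑ j ∈ (range N).image β, blockSum x N β j ^ 2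

section Blocks

variable {x : ℕ → ℝ} {N : ℕ} {β : ℕ → ℕ}

lemma blockVal_eq_sum_of_subset {S : Finset ℕ} (hS : (range N).image β ⊆ S) :
    blockVal x N β = ∑ j ∈ S, blockSum x N β j ^ 2 :=
  sum_subset hS fun j _ hj => by
    rw [blockSum, filter_eq_empty_iff.2 fun k hk hkj => hj (mem_image.2 ⟨k, hk, hkj⟩)]
    simp

lemma filter_eq_Icc_of_monotone (hβ : Monotone β) {j : ℕ}
    (hne : ((range N).filter (β · = j)).Nonempty) :
    (range N).filter (β · = j) = Icc (min' _ hne) (max' _ hne) := by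
  ext k
  refine ⟨fun hk => mem_Icc.2 ⟨min'_le _ _ hk, le_max' _ _ hk⟩, fun hk => ?_⟩
  obtain ⟨hlo, hhi⟩ := mem_Icc.1 hk
  obtain ⟨hminN, hmin⟩ := mem_filter.1 (min'_mem _ hne)
  obtain ⟨hmaxN, hmax⟩ := mem_filter.1 (max'_mem _ hne)
  refine mem_filter.2 ⟨mem_range.2 (hhi.trans_lt (mem_range.1 hmaxN)), ?_⟩
  exact le_antisymm (hmax ▸ hβ hhi) (hmin ▸ hβ hlo)

lemma sqrt_blockVal_mem_estimates (x : ℕ → ℝ) (N : ℕ) (hβ : Monotone β) :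
    √(blockVal x N β) ∈ estimates x := by
  set S := (range N).image β
  set e := S.orderEmbOfFin rfl
  set fiber : Fin S.card → Finset ℕ := fun i => (range N).filter (β · = e i)
  have hne : ∀ i, (fiber i).Nonempty := fun i => by
    obtain ⟨k, hk, hkj⟩ := mem_image.1 (S.orderEmbOfFin_mem rfl i)
    exact ⟨k, mem_filter.2 ⟨hk, hkj⟩⟩
  have hβmin : ∀ i, β ((fiber i).min' (hne i)) = e i := fun i =>
    (mem_filter.1 (min'_mem _ (hne i))).2
  have hβmax : ∀ i, β ((fiber i).max' (hne i)) = e i := fun i =>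
    (mem_filter.1 (max'_mem _ (hne i))).2
  refine ⟨S.card, fun i => ((fiber i).min' (hne i), (fiber i).max' (hne i)),
    ⟨fun i => min'_le_max' _ (hne i), fun i i' hii' => ?_⟩, ?_⟩
  · by_contra! h
    have := hβ h
    rw [hβmin, hβmax] at this
    exact (e.strictMono hii').not_ge this
  · congr 1
    have hS : univ.image e = S := S.image_orderEmbOfFin_univ rfl
    rw [blockVal, show (range N).image β = univ.image e from hS.symm,
      sum_image e.injective.injOn]
    exact sum_congr rfl fun i _ => by rw [blockSum, filter_eq_Icc_of_monotone hβ (hne i)]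

lemma blockVal_le_sq_jamesNorm (hx : MemJ x) (N : ℕ) (hβ : Monotone β) :
    blockVal x N β ≤ jamesNorm x ^ 2 :=
  (Real.sqrt_le_iff.1 (le_csSup hx (sqrt_blockVal_mem_estimates x N hβ))).2

lemma jamesNorm_nonneg (hx : MemJ x) : 0 ≤ jamesNorm x :=
  (Real.sqrt_nonneg _).trans (le_csSup hx (sqrt_blockVal_mem_estimates x 0 monotone_id))

end Blocks

/- `blockIndex f k` counts the endpoints of the intervals `f i` that `k` has passed, so the
fibres of `blockIndex f` are the intervals `f i` and the gaps between them. -/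
def blockIndex {n : ℕ} (f : Fin n → ℕ × ℕ) (k : ℕ) : ℕ :=
  ∑ i, ((if (f i).1 ≤ k then 1 else 0) + if (f i).2 < k then 1 else 0)

section BlockIndex

variable {n : ℕ} {f : Fin n → ℕ × ℕ}

lemma blockIndex_mono (f : Fin n → ℕ × ℕ) : Monotone (blockIndex f) := fun k l hkl =>
  sum_le_sum fun i _ => add_le_add (by split_ifs <;> omega) (by split_ifs <;> omega)

lemma blockIndex_lt_of_lt_fst {k : ℕ} {i : Fin n} (hk : k < (f i).1) :
    blockIndex f k < blockIndex f (f i).1 :=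
  sum_lt_sum (fun i' _ => add_le_add (by split_ifs <;> omega) (by split_ifs <;> omega))
    ⟨i, mem_univ _, by simp only [le_refl, if_true]; split_ifs <;> omega⟩

lemma blockIndex_fst_lt_of_snd_lt {k : ℕ} {i : Fin n} (hi : (f i).1 ≤ (f i).2)
    (hk : (f i).2 < k) : blockIndex f (f i).1 < blockIndex f k :=
  sum_lt_sum (fun i' _ => add_le_add (by split_ifs <;> omega) (by split_ifs <;> omega))
    ⟨i, mem_univ _, by split_ifs <;> omega⟩

lemma blockIndex_eq_iff (hf : Admissible n f) (i : Fin n) {k : ℕ} :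
    blockIndex f k = blockIndex f (f i).1 ↔ k ∈ Icc (f i).1 (f i).2 := by
  rw [mem_Icc]
  refine ⟨fun h => ?_, fun hk => sum_congr rfl fun i' _ => ?_⟩
  · by_contra! hk
    rcases lt_or_ge k (f i).1 with h1 | h1
    · exact (blockIndex_lt_of_lt_fst h1).ne h
    · exact (blockIndex_fst_lt_of_snd_lt (hf.1 i) (hk h1)).ne' h
  · have := hf.1 i
    have := hf.1 i'
    rcases lt_trichotomy i' i with h | rfl | h
    · have := hf.2 i' i h
      split_ifs <;> omega
    · split_ifs <;> omega
    · have := hf.2 i i' h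
      split_ifs <;> omega

lemma sum_sq_le_blockVal_blockIndex (x : ℕ → ℝ) (hf : Admissible n f) {N : ℕ}
    (hN : ∀ i, (f i).2 < N) :
    ∑ i, (∑ k ∈ Icc (f i).1 (f i).2, x k) ^ 2 ≤ blockVal x N (blockIndex f) := by
  have hfiber : ∀ i, (range N).filter (blockIndex f · = blockIndex f (f i).1) =
      Icc (f i).1 (f i).2 := fun i => by
    ext k
    rw [mem_filter, mem_range, blockIndex_eq_iff hf]
    exact ⟨And.right, fun hk => ⟨(mem_Icc.1 hk).2.trans_lt (hN i), hk⟩⟩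
  have hstrict : StrictMono fun i => blockIndex f (f i).1 := fun i i' h =>
    blockIndex_lt_of_lt_fst ((hf.1 i).trans_lt (hf.2 i i' h))
  calc ∑ i, (∑ k ∈ Icc (f i).1 (f i).2, x k) ^ 2
      = ∑ j ∈ univ.image fun i => blockIndex f (f i).1, blockSum x N (blockIndex f) j ^ 2 := by
        rw [sum_image hstrict.injective.injOn]
        exact sum_congr rfl fun i _ => by rw [blockSum, hfiber]
    _ ≤ blockVal x N (blockIndex f) := by
        refine sum_le_sum_of_subset_of_nonneg (fun j hj => ?_) fun _ _ _ => sq_nonneg _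
        obtain ⟨i, -, rfl⟩ := mem_image.1 hj
        exact mem_image_of_mem _ (mem_range.2 ((hf.1 i).trans_lt (hN i)))

end BlockIndex

lemma sqrt_mem_upperBounds_estimates {x : ℕ → ℝ} (M : ℕ) {c : ℝ}
    (h : ∀ N, M < N → ∀ β, Monotone β → blockVal x N β ≤ c) :
    √c ∈ upperBounds (estimates x) := by
  rintro _ ⟨n, f, hf, rfl⟩
  set N := M + 1 + ∑ i, (f i).2
  have hN : ∀ i, (f i).2 < N := fun i => by
    have := single_le_sum (fun i _ => Nat.zero_le (f i).2) (mem_univ i)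
    omega
  exact Real.sqrt_le_sqrt
    ((sum_sq_le_blockVal_blockIndex x hf hN).trans (h N (by omega) _ (blockIndex_mono f)))

section Transfer

variable {x : ℕ → ℝ} {N : ℕ}

lemma blockSum_add (y z : ℕ → ℝ) (β : ℕ → ℕ) :
    blockSum (y + z) N β = blockSum y N β + blockSum z N β :=
  funext fun _ => sum_add_distrib

lemma blockSum_sub (y z : ℕ → ℝ) (β : ℕ → ℕ) :
    blockSum (y - z) N β = blockSum y N β - blockSum z N β :=
  funext fun _ => sum_sub_distrib _ _

lemma blockSum_single {i : ℕ} (hi : i < N) (a : ℝ) (β : ℕ → ℕ) (j : ℕ) :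
    blockSum (Pi.single i a) N β j = if β i = j then a else 0 := by
  rw [blockSum, sum_pi_single']
  simp [hi]

lemma blockSum_comp {g : ℕ → ℕ} {m : ℕ} (β : ℕ → ℕ) (hm : m < N) (hgm : g m < N)
    (hx : ∀ k, k ≠ m → g k ≠ k → x k = 0) :
    blockSum x N (β ∘ g) = blockSum (x + Pi.single (g m) (x m) - Pi.single m (x m)) N β := by
  funext j
  rw [blockSum_sub, blockSum_add, Pi.sub_apply, Pi.add_apply, blockSum_single hgm,
    blockSum_single hm]
  simp only [blockSum, sum_filter, Function.comp_apply]
  have hmN : m ∈ range N := mem_range.2 hm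
  have hoff : ∀ k ∈ (range N).erase m,
      (if β (g k) = j then x k else 0) = if β k = j then x k else 0 := fun k hk => by
    by_cases hgk : g k = k
    · rw [hgk]
    · simp [hx k (ne_of_mem_erase hk) hgk]
  rw [← add_sum_erase _ _ hmN, ← add_sum_erase _ _ hmN, sum_congr rfl hoff]
  ring

lemma blockVal_comp {g : ℕ → ℕ} {m : ℕ} (β : ℕ → ℕ) (hm : m < N) (hgm : g m < N)
    (hx : ∀ k, k ≠ m → g k ≠ k → x k = 0) :
    blockVal x N (β ∘ g) = blockVal (x + Pi.single (g m) (x m) - Pi.single m (x m)) N β := by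
  rw [blockVal_eq_sum_of_subset (subset_union_left (s₂ := (range N).image β)),
    blockVal_eq_sum_of_subset subset_union_right, blockSum_comp β hm hgm hx]

lemma jamesNorm_mem_upperBounds_estimates_add_single_sub_single (hx : MemJ x) {m m' : ℕ}
    (hgap : ∀ k, min m m' < k → k < max m m' → x k = 0) :
    jamesNorm x ∈ upperBounds (estimates (x + Pi.single m' (x m) - Pi.single m (x m))) := by
  set g : ℕ → ℕ := fun k => if min m m' ≤ k ∧ k ≤ max m m' ∧ k ≠ m' then m' else k
  have hg : Monotone g := fun k l hkl => by
    simp only [g]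
    split_ifs <;> omega
  have hgm : g m = m' := by
    simp only [g]
    split_ifs <;> omega
  have hgx : ∀ k, k ≠ m → g k ≠ k → x k = 0 := fun k hkm hgk => by
    simp only [g] at hgk
    split_ifs at hgk with h
    · exact hgap k (by omega) (by omega)
    · exact absurd rfl hgk
  rw [← Real.sqrt_sq (jamesNorm_nonneg hx), ← hgm]
  refine sqrt_mem_upperBounds_estimates (max m (g m)) fun N hN β hβ => ?_
  rw [← blockVal_comp β (by omega) (by omega) hgx]
  exact blockVal_le_sq_jamesNorm hx N (hβ.comp hg)

end Transfer

lemma mem_ballJ_of_one_mem_upperBounds {x : ℕ → ℝ} (h : 1 ∈ upperBounds (estimates x)) :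
    x ∈ ballJ :=
  ⟨⟨1, h⟩, csSup_le ⟨_, sqrt_blockVal_mem_estimates x 0 monotone_id⟩ h⟩

lemma mem_openSegment_add_single_sub_single {ι : Type*} [DecidableEq ι] (x : ι → ℝ) (i j : ι)
    {a b : ℝ} (hab : 0 < a * b) :
    x ∈ openSegment ℝ (x + Pi.single i b - Pi.single j b) (x + Pi.single j a - Pi.single i a) := by
  have hpos : 0 < a / (a + b) ∧ 0 < b / (a + b) := by
    rcases mul_pos_iff.1 hab with ⟨ha, hb⟩ | ⟨ha, hb⟩
    · exact ⟨by positivity, by positivity⟩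
    · exact ⟨div_pos_of_neg_of_neg ha (by linarith), div_pos_of_neg_of_neg hb (by linarith)⟩
  have hsum : a + b ≠ 0 := fun h => by simp [h] at hpos
  refine ⟨a / (a + b), b / (a + b), hpos.1, hpos.2, by field_simp, ?_⟩
  funext k
  simp only [Pi.add_apply, Pi.sub_apply, Pi.smul_apply, smul_eq_mul, Pi.single_apply]
  field_simp
  split_ifs <;> ring

theorem stmt10 (x : ℕ → ℝ) (hx : x ∈ Set.extremePoints ℝ ballJ)
    (n₁ n₂ : ℕ) (h : Consecutive x n₁ n₂) : x n₁ * x n₂ < 0 := by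
  obtain ⟨h₁, h₂, hn, hgap⟩ := h
  have hmerge : ∀ m m', min m m' = n₁ → max m m' = n₂ →
      x + Pi.single m' (x m) - Pi.single m (x m) ∈ ballJ := fun m m' hmin hmax =>
    mem_ballJ_of_one_mem_upperBounds <| upperBounds_mono_mem hx.1.2 <|
      jamesNorm_mem_upperBounds_estimates_add_single_sub_single hx.1.1 (hmin ▸ hmax ▸ hgap)
  by_contra! hab
  have hseg := mem_openSegment_add_single_sub_single x n₁ n₂
    (hab.lt_of_ne' (mul_ne_zero h₁ h₂))
  have hmerged := congrFun (hx.2 (hmerge n₂ n₁ (min_eq_right hn.le) (max_eq_left hn.le))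
    (hmerge n₁ n₂ (min_eq_left hn.le) (max_eq_right hn.le)) hseg) n₂
  rw [Pi.sub_apply, Pi.add_apply, Pi.single_eq_of_ne hn.ne', Pi.single_eq_same] at hmerged
  exact h₂ (by linarith)
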